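/- Let a, b, c be integers with a ≠ 0, let q(x) = a·x² + b·x + c and d = b² − 4·a·c, and let u, v be positive integers with gcd(2·a, u·v) = 1. Put Q₀ = {x ∈ ℤ : q(x) ≡ 0 (mod u·v)}, Q₁ = {x ∈ ℤ : q(x) ≡ 0 (mod v)}, Σ₀′ = {σ ∈ ℤ : 0 ≤ σ < u·v and σ² ≡ d (mod u·v)}, and Σ₁′ = {σ ∈ ℤ : 0 ≤ σ < v and σ² ≡ d (mod v)}. Then Q₁ is nonempty and Q₁ = Q₀ if and only if Σ₁′ is nonempty and Σ₀′ = {σ + j·v : σ ∈ Σ₁′, j ∈ {0, 1, …, u − 1}}. -/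

import Mathlib

/-!
Completing the square, `(2ax + b)² - d = 4a·q(x)`, turns roots of `q` modulo any `m` prime to
`2a` into square roots of `d` modulo `m`, and `x ↦ 2ax + b` hits every residue class modulo
`u·v`. Hence both sides of the equivalence say that every square root of `d` modulo `v` is
already one modulo `u·v`.
-/

lemma dvd_sq_sub_iff_of_modEq {m x y D : ℤ} (h : x ≡ y [ZMOD m]) :
    m ∣ x ^ 2 - D ↔ m ∣ y ^ 2 - D := by
  rw [← Int.modEq_iff_dvd, ← Int.modEq_iff_dvd]
  exact ⟨fun h' => h'.trans (h.pow 2), fun h' => h'.trans (h.pow 2).symm⟩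

section Quadratic

variable {a b c m : ℤ}

lemma sq_two_mul_add_sub_discrim (x : ℤ) :
    (2 * a * x + b) ^ 2 - (b ^ 2 - 4 * a * c) = 4 * a * (a * x ^ 2 + b * x + c) := by
  ring

lemma dvd_quadratic_iff (h : IsCoprime (2 * a) m) (x : ℤ) :
    m ∣ a * x ^ 2 + b * x + c ↔ m ∣ (2 * a * x + b) ^ 2 - (b ^ 2 - 4 * a * c) := by
  have h4a : IsCoprime m (4 * a) := by
    have h' : IsCoprime (2 * (2 * a)) m := h.of_mul_left_left.mul_left h
    rw [← mul_assoc] at h'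
    exact h'.symm
  rw [sq_two_mul_add_sub_discrim]
  exact ⟨fun hq => hq.mul_left _, h4a.dvd_of_dvd_mul_left⟩

lemma exists_two_mul_add_modEq (h : IsCoprime (2 * a) m) (r : ℤ) :
    ∃ x, 2 * a * x + b ≡ r [ZMOD m] := by
  obtain ⟨s, t, hst⟩ := h
  exact ⟨s * (r - b), Int.modEq_iff_dvd.mpr ⟨t * (r - b), by linear_combination (b - r) * hst⟩⟩

lemma nonempty_setOf_dvd_quadratic_iff (h : IsCoprime (2 * a) m) :
    {x : ℤ | m ∣ a * x ^ 2 + b * x + c}.Nonempty ↔ ∃ σ, m ∣ σ ^ 2 - (b ^ 2 - 4 * a * c) := by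
  simp only [Set.Nonempty, Set.mem_ofPred_eq, dvd_quadratic_iff h]
  constructor
  · rintro ⟨x, hx⟩
    exact ⟨_, hx⟩
  · rintro ⟨σ, hσ⟩
    obtain ⟨x, hx⟩ := exists_two_mul_add_modEq (b := b) h σ
    exact ⟨x, (dvd_sq_sub_iff_of_modEq hx).2 hσ⟩

lemma setOf_dvd_quadratic_eq_iff {n : ℤ} (h : IsCoprime (2 * a) n) (hmn : m ∣ n) :
    {x : ℤ | m ∣ a * x ^ 2 + b * x + c} = {x : ℤ | n ∣ a * x ^ 2 + b * x + c} ↔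
      ∀ σ, m ∣ σ ^ 2 - (b ^ 2 - 4 * a * c) → n ∣ σ ^ 2 - (b ^ 2 - 4 * a * c) := by
  simp only [Set.ext_iff, Set.mem_ofPred_eq, dvd_quadratic_iff h,
    dvd_quadratic_iff (h.of_isCoprime_of_dvd_right hmn)]
  constructor
  · intro H σ hσ
    obtain ⟨x, hx⟩ := exists_two_mul_add_modEq (b := b) h σ
    exact (dvd_sq_sub_iff_of_modEq hx).1
      ((H x).1 ((dvd_sq_sub_iff_of_modEq (hx.of_dvd hmn)).2 hσ))
  · exact fun H x => ⟨H _, hmn.trans⟩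

end Quadratic

section Residues

variable {u v D : ℤ}

lemma exists_add_mul_iff (P : ℤ → Prop) (hv : 0 < v) (y : ℤ) :
    (∃ σ, (0 ≤ σ ∧ σ < v ∧ P σ) ∧ ∃ j, 0 ≤ j ∧ j < u ∧ y = σ + j * v) ↔
      0 ≤ y ∧ y < u * v ∧ P (y % v) := by
  constructor
  · rintro ⟨σ, ⟨hσ0, hσv, hσ⟩, j, hj0, hju, rfl⟩
    have hj : j * v ≤ (u - 1) * v := mul_le_mul_of_nonneg_right (by omega) hv.le
    refine ⟨by positivity, by nlinarith, ?_⟩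
    rwa [Int.add_mul_emod_self_right, Int.emod_eq_of_lt hσ0 hσv]
  · rintro ⟨hy0, hyuv, hy⟩
    refine ⟨y % v, ⟨Int.emod_nonneg y hv.ne', Int.emod_lt_of_pos y hv, hy⟩,
      y / v, Int.ediv_nonneg hy0 hv.le, ?_, ?_⟩
    · exact (Int.ediv_lt_iff_lt_mul hv).mpr hyuv
    · linarith [Int.emod_add_mul_ediv y v, mul_comm v (y / v)]

lemma nonempty_residues_iff (hv : 0 < v) :
    {σ : ℤ | 0 ≤ σ ∧ σ < v ∧ v ∣ σ ^ 2 - D}.Nonempty ↔ ∃ σ, v ∣ σ ^ 2 - D := by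
  constructor
  · rintro ⟨σ, -, -, hσ⟩
    exact ⟨σ, hσ⟩
  · rintro ⟨σ, hσ⟩
    exact ⟨σ % v, Int.emod_nonneg σ hv.ne', Int.emod_lt_of_pos σ hv,
      (dvd_sq_sub_iff_of_modEq (Int.mod_modEq σ v)).2 hσ⟩

lemma residues_eq_lifts_iff (hu : 0 < u) (hv : 0 < v) :
    {σ : ℤ | 0 ≤ σ ∧ σ < u * v ∧ u * v ∣ σ ^ 2 - D} =
        {y : ℤ | ∃ σ : ℤ, (0 ≤ σ ∧ σ < v ∧ v ∣ σ ^ 2 - D) ∧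
          ∃ j : ℤ, 0 ≤ j ∧ j < u ∧ y = σ + j * v} ↔
      ∀ σ, v ∣ σ ^ 2 - D → u * v ∣ σ ^ 2 - D := by
  simp only [Set.ext_iff, Set.mem_ofPred_eq, exists_add_mul_iff _ hv,
    dvd_sq_sub_iff_of_modEq (Int.mod_modEq _ v)]
  constructor
  · intro H σ hσ
    have huv : 0 < u * v := mul_pos hu hv
    have hr : σ % (u * v) ≡ σ [ZMOD u * v] := Int.mod_modEq σ _
    refine (dvd_sq_sub_iff_of_modEq hr).1 ((H _).2 ⟨Int.emod_nonneg σ huv.ne',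
      Int.emod_lt_of_pos σ huv, ?_⟩).2.2
    exact (dvd_sq_sub_iff_of_modEq (hr.of_dvd (dvd_mul_left v u))).2 hσ
  · exact fun H y => and_congr_right fun _ => and_congr_right fun _ =>
      ⟨(dvd_mul_left v u).trans, H y⟩

end Residues

theorem lemma_3_2_a_iff_d_general (a b c u v : ℤ) (hu : 0 < u) (hv : 0 < v)
    (hcop : Int.gcd (2 * a) (u * v) = 1) :
    (({x : ℤ | v ∣ a * x ^ 2 + b * x + c}).Nonempty ∧
      {x : ℤ | v ∣ a * x ^ 2 + b * x + c} = {x : ℤ | u * v ∣ a * x ^ 2 + b * x + c}) ↔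
    (({σ : ℤ | 0 ≤ σ ∧ σ < v ∧ v ∣ σ ^ 2 - (b ^ 2 - 4 * a * c)}).Nonempty ∧
      {σ : ℤ | 0 ≤ σ ∧ σ < u * v ∧ u * v ∣ σ ^ 2 - (b ^ 2 - 4 * a * c)} =
        {y : ℤ | ∃ σ : ℤ, (0 ≤ σ ∧ σ < v ∧ v ∣ σ ^ 2 - (b ^ 2 - 4 * a * c)) ∧
          ∃ j : ℤ, 0 ≤ j ∧ j < u ∧ y = σ + j * v}) := by
  have hco : IsCoprime (2 * a) (u * v) := Int.isCoprime_iff_gcd_eq_one.mpr hcop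
  rw [nonempty_setOf_dvd_quadratic_iff hco.of_mul_right_right,
    setOf_dvd_quadratic_eq_iff hco (dvd_mul_left v u), nonempty_residues_iff hv,
    residues_eq_lifts_iff hu hv]

/-- Equivalence (a) ⟺ (d) of the paper's Lemma 3.2. -/
theorem lemma_3_2_a_iff_d (a b c u v : ℤ) (ha : a ≠ 0) (hu : 0 < u) (hv : 0 < v)
    (hcop : Int.gcd (2 * a) (u * v) = 1) :
    (({x : ℤ | v ∣ a * x ^ 2 + b * x + c}).Nonempty ∧
      {x : ℤ | v ∣ a * x ^ 2 + b * x + c} = {x : ℤ | u * v ∣ a * x ^ 2 + b * x + c}) ↔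
    (({σ : ℤ | 0 ≤ σ ∧ σ < v ∧ v ∣ σ ^ 2 - (b ^ 2 - 4 * a * c)}).Nonempty ∧
      {σ : ℤ | 0 ≤ σ ∧ σ < u * v ∧ u * v ∣ σ ^ 2 - (b ^ 2 - 4 * a * c)} =
        {y : ℤ | ∃ σ : ℤ, (0 ≤ σ ∧ σ < v ∧ v ∣ σ ^ 2 - (b ^ 2 - 4 * a * c)) ∧
          ∃ j : ℤ, 0 ≤ j ∧ j < u ∧ y = σ + j * v}) :=
  lemma_3_2_a_iff_d_general a b c u v hu hv hcop
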